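/- Let E be a complex Hilbert space, d ≥ 1, F : Fin d → E an orthonormal family, and U : E ≃ₗᵢ[ℂ] E a unitary such that U (F i) lies in the linear span of {F j : j ∈ Fin d} for every i. Let α : Fin d → ℂ with ∑ i, ‖α i‖² = 1, set ψ := ∑ i, α i • F i, and define β a := ∑ i, ‖α i‖² * ‖⟪F a, U (F i)⟫‖². Then there exists a unitary V : E ≃ₗᵢ[ℂ] E such that ‖⟪F a, V ψ⟫‖² = β a for every a : Fin d. (This is the core of the paper's Theorem 1, QCAoM ⊆ QCNoM: every family of observed probabilities obtainable in universal quantum theory with Absoluteness of Measurement can be reproduced in universal quantum theory with Non-absoluteness of Measurement, by a unitary V mapping the superposed post-measurement state ψ = ∑ᵢ αᵢ Fᵢ to ∑ₐ √βₐ Fₐ.) -/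

import Mathlib

open scoped ComplexInnerProductSpace

/-! The state `φ = ∑ₐ √βₐ Fₐ` has the required outcome probabilities, and since `β` is a
probability vector (Parseval for the columns `U Fᵢ`) it has the same norm as `ψ`. A unitary taking
`ψ` to `φ` up to a phase is the required `V`; it can be taken to be a reflection. -/

section Unitary

variable {𝕜 E : Type*} [RCLike 𝕜] [NormedAddCommGroup E] [InnerProductSpace 𝕜 E]

local notation "⟪" x ", " y "⟫" => inner 𝕜 x y

theorem Submodule.reflection_sub_of_inner_comm {v w : E} (h : ‖v‖ = ‖w‖)
    (hvw : ⟪v, w⟫ = ⟪w, v⟫) : reflection (𝕜 ∙ (v - w))ᗮ v = w := by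
  set R : E ≃ₗᵢ[𝕜] E := reflection (𝕜 ∙ (v - w))ᗮ
  suffices R v + R v = w + w by
    apply smul_right_injective E (two_ne_zero : (2 : 𝕜) ≠ 0)
    simpa [two_smul] using this
  have h_sub : R (v - w) = -(v - w) := reflection_orthogonalComplement_singleton_eq_neg (v - w)
  have h_add : R (v + w) = v + w := by
    apply reflection_mem_subspace_eq_self
    rw [mem_orthogonal_singleton_iff_inner_left, inner_sub_right, inner_add_left,
      inner_add_left, inner_self_eq_norm_sq_to_K, inner_self_eq_norm_sq_to_K, hvw, h]
    ring
  convert congr_arg₂ (· + ·) h_add h_sub using 1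
  · simp
  · abel

/-- A single reflection suffices once the phase of `w` is chosen so that `⟪v, c • w⟫` is real. -/
theorem exists_linearIsometryEquiv_apply_eq_smul {v w : E} (h : ‖v‖ = ‖w‖) :
    ∃ c : 𝕜, ‖c‖ = 1 ∧ ∃ V : E ≃ₗᵢ[𝕜] E, V v = c • w := by
  obtain ⟨c, hc, hcz⟩ := RCLike.exists_norm_eq_mul_self ⟪v, w⟫
  have h_real : ⟪v, c • w⟫ = (‖⟪v, w⟫‖ : 𝕜) := by rw [inner_smul_right, hcz]
  refine ⟨c, hc, Submodule.reflection (𝕜 ∙ (v - c • w))ᗮ, ?_⟩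
  refine Submodule.reflection_sub_of_inner_comm (by rw [norm_smul, hc, one_mul, h]) ?_
  rw [← inner_conj_symm (c • w) v, h_real, RCLike.conj_ofReal]

end Unitary

namespace Orthonormal

variable {𝕜 E ι : Type*} [RCLike 𝕜] [NormedAddCommGroup E] [InnerProductSpace 𝕜 E] [Fintype ι]
  {v : ι → E}

local notation "⟪" x ", " y "⟫" => inner 𝕜 x y

theorem norm_sum_smul_sq (hv : Orthonormal 𝕜 v) (c : ι → 𝕜) :
    ‖∑ i, c i • v i‖ ^ 2 = ∑ i, ‖c i‖ ^ 2 := by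
  have h := hv.inner_sum c c Finset.univ
  simp_rw [inner_self_eq_norm_sq_to_K, RCLike.conj_mul] at h
  exact_mod_cast h

theorem sum_norm_inner_sq_of_mem_span (hv : Orthonormal 𝕜 v) {x : E}
    (hx : x ∈ Submodule.span 𝕜 (Set.range v)) : ∑ i, ‖⟪v i, x⟫‖ ^ 2 = ‖x‖ ^ 2 := by
  obtain ⟨c, rfl⟩ := (Submodule.mem_span_range_iff_exists_fun 𝕜).1 hx
  simp_rw [hv.norm_sum_smul_sq, hv.inner_right_fintype]

theorem norm_inner_sum_sqrt_smul_sq (hv : Orthonormal 𝕜 v) {p : ι → ℝ} (hp : 0 ≤ p) (a : ι) :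
    ‖⟪v a, ∑ b, (√(p b) : 𝕜) • v b⟫‖ ^ 2 = p a := by
  rw [hv.inner_right_fintype, RCLike.norm_ofReal, sq_abs, Real.sq_sqrt (hp a)]

end Orthonormal

theorem stmt_16_general {E : Type*} [NormedAddCommGroup E] [InnerProductSpace ℂ E]
    {d : ℕ} (F : Fin d → E) (hF : Orthonormal ℂ F)
    (U : E ≃ₗᵢ[ℂ] E)
    (hU : ∀ i, U (F i) ∈ Submodule.span ℂ (Set.range F))
    (α : Fin d → ℂ) (hα : ∑ i, ‖α i‖ ^ 2 = 1)
    (ψ : E) (hψ : ψ = ∑ i, α i • F i)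
    (β : Fin d → ℝ)
    (hβ : ∀ a, β a = ∑ i, ‖α i‖ ^ 2 * ‖⟪F a, U (F i)⟫‖ ^ 2) :
    ∃ V : E ≃ₗᵢ[ℂ] E, ∀ a, ‖⟪F a, V ψ⟫‖ ^ 2 = β a := by
  have hβ_nonneg : 0 ≤ β := fun a => by rw [hβ a]; positivity
  have hβ_sum : ∑ a, β a = 1 := by
    simp_rw [hβ]
    rw [Finset.sum_comm]
    simp_rw [← Finset.mul_sum, hF.sum_norm_inner_sq_of_mem_span (hU _), U.norm_map,
      hF.norm_eq_one, one_pow, mul_one, hα]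
  set φ : E := ∑ a, (√(β a) : ℂ) • F a
  have h_norm : ‖ψ‖ = ‖φ‖ := by
    refine (sq_eq_sq₀ (norm_nonneg _) (norm_nonneg _)).1 ?_
    simp_rw [hψ, φ, hF.norm_sum_smul_sq, Complex.norm_real, Real.norm_eq_abs, sq_abs,
      Real.sq_sqrt (hβ_nonneg _), hα, hβ_sum]
  obtain ⟨c, hc, V, hV⟩ := exists_linearIsometryEquiv_apply_eq_smul (𝕜 := ℂ) h_norm
  refine ⟨V, fun a => ?_⟩
  rw [hV, inner_smul_right, norm_mul, hc, one_mul]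
  exact hF.norm_inner_sum_sqrt_smul_sq hβ_nonneg a

/-- Core of Theorem 1 (QCAoM ⊆ QCNoM): the AoM probabilities
`β a = ∑ i, ‖α i‖² ‖⟪F a, U (F i)⟫‖²` are reproduced in NoM by some unitary `V`
acting on the pure state `ψ = ∑ i, α i • F i`: `‖⟪F a, V ψ⟫‖² = β a`. -/
theorem stmt_16 {E : Type*} [NormedAddCommGroup E] [InnerProductSpace ℂ E]
    [CompleteSpace E]
    {d : ℕ} (hd : 1 ≤ d) (F : Fin d → E) (hF : Orthonormal ℂ F)
    (U : E ≃ₗᵢ[ℂ] E)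
    (hU : ∀ i, U (F i) ∈ Submodule.span ℂ (Set.range F))
    (α : Fin d → ℂ) (hα : ∑ i, ‖α i‖ ^ 2 = 1)
    (ψ : E) (hψ : ψ = ∑ i, α i • F i)
    (β : Fin d → ℝ)
    (hβ : ∀ a, β a = ∑ i, ‖α i‖ ^ 2 * ‖⟪F a, U (F i)⟫‖ ^ 2) :
    ∃ V : E ≃ₗᵢ[ℂ] E, ∀ a, ‖⟪F a, V ψ⟫‖ ^ 2 = β a :=
  stmt_16_general F hF U hU α hα ψ hψ β hβ
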